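/- Let P be a two-user q-ary input multiple-access channel (q prime) and (α,γ) ∈ F_q² with (α,γ) ≠ (0,0). Then the channel (P[α,γ])^g is degraded with respect to (P⁺)[α,γ]: for all y₁, y₂, x, s, (P[α,γ])^g(y₁,y₂,x | s) = ∑_{u₁,v₁ : αu₁+γv₁ = x} (P⁺)[α,γ](y₁,y₂,u₁,v₁ | s); that is, (P[α,γ])^g is obtained from (P⁺)[α,γ] by deterministically processing the output (y₁,y₂,u₁,v₁) into (y₁,y₂, αu₁+γv₁). -/

import Mathlib

open Finset

namespace PolarMAC

/-- A two-user `q`-ary input multiple-access channel: an arbitrary finite output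
alphabet `Y` together with transition probabilities `P x w y = P(y | x, w)`. -/
structure MAC (q : ℕ) where
  Y : Type
  [fintypeY : Fintype Y]
  P : ZMod q → ZMod q → Y → ℝ

attribute [instance] MAC.fintypeY

/-- `M` is a genuine MAC: entries nonnegative and rows summing to one. -/
def IsMAC {q : ℕ} [Fact (Nat.Prime q)] (M : MAC q) : Prop :=
  (∀ x w y, 0 ≤ M.P x w y) ∧ ∀ x w, ∑ y, M.P x w y = 1

/-- Entropy (base `q`) of a pmf on a finite type. -/
noncomputable def Hq (q : ℕ) {α : Type*} [Fintype α] (p : α → ℝ) : ℝ :=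
  ∑ a, -(p a * Real.logb q (p a))

/-- Mutual information (base `q`) between the two coordinates of a joint pmf. -/
noncomputable def MIq (q : ℕ) {α β : Type*} [Fintype α] [Fintype β] (p : α → β → ℝ) : ℝ :=
  Hq q (fun a => ∑ b, p a b) + Hq q (fun b => ∑ a, p a b) - Hq q (fun ab : α × β => p ab.1 ab.2)

variable (q : ℕ) [Fact (Nat.Prime q)]

/-- `I⁽¹⁾(P) = I(X; Y W)` for independent uniform inputs. -/
noncomputable def I1 (M : MAC q) : ℝ :=
  MIq q (fun (x : ZMod q) (wy : ZMod q × M.Y) => M.P x wy.1 wy.2 / (q : ℝ) ^ 2)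

/-- `I⁽²⁾(P) = I(W; Y X)` for independent uniform inputs. -/
noncomputable def I2 (M : MAC q) : ℝ :=
  MIq q (fun (w : ZMod q) (xy : ZMod q × M.Y) => M.P xy.1 w xy.2 / (q : ℝ) ^ 2)

/-- `I⁽¹²⁾(P) = I(X W; Y)` for independent uniform inputs. -/
noncomputable def I12 (M : MAC q) : ℝ :=
  MIq q (fun (xw : ZMod q × ZMod q) (y : M.Y) => M.P xw.1 xw.2 y / (q : ℝ) ^ 2)

/-- `K(P) = (I⁽¹⁾(P), I⁽²⁾(P), I⁽¹²⁾(P)) ∈ ℝ³`, with the Euclidean norm. -/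
noncomputable def Kvec (M : MAC q) : EuclideanSpace ℝ (Fin 3) :=
  WithLp.toLp 2 ![I1 q M, I2 q M, I12 q M]

/-- The transform `P⁻(y₁,y₂ | u₁,v₁) = q⁻² ∑_{u₂,v₂} P(y₁|u₁+u₂, v₁+v₂) P(y₂|u₂,v₂)`. -/
noncomputable def minusT (M : MAC q) : MAC q where
  Y := M.Y × M.Y
  P := fun u₁ v₁ y =>
    ((q : ℝ) ^ 2)⁻¹ * ∑ u₂, ∑ v₂, M.P (u₁ + u₂) (v₁ + v₂) y.1 * M.P u₂ v₂ y.2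

/-- The transform `P⁺(y₁,y₂,u₁,v₁ | u₂,v₂) = q⁻² P(y₁|u₁+u₂, v₁+v₂) P(y₂|u₂,v₂)`,
with output `((y₁, y₂), (u₁, v₁))`. -/
noncomputable def plusT (M : MAC q) : MAC q where
  Y := (M.Y × M.Y) × ZMod q × ZMod q
  P := fun u₂ v₂ z =>
    ((q : ℝ) ^ 2)⁻¹ * (M.P (z.2.1 + u₂) (z.2.2 + v₂) z.1.1 * M.P u₂ v₂ z.1.2)



/-- A single-user `q`-ary input channel with finite output alphabet `B`. -/
structure Chan (q : ℕ) where
  B : Type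
  [fintypeB : Fintype B]
  Q : ZMod q → B → ℝ

attribute [instance] Chan.fintypeB

/-- `C` is a genuine channel: entries nonnegative, rows summing to one. -/
def IsChan {q : ℕ} [Fact (Nat.Prime q)] (C : Chan q) : Prop :=
  (∀ x b, 0 ≤ C.Q x b) ∧ ∀ x, ∑ b, C.Q x b = 1


/-- `P[α,γ](y|s) = q⁻¹ ∑_{u,v : αu+γv=s} P(y|u,v)`, the channel `αU + γV → Y`. -/
noncomputable def chLin (M : MAC q) (a g : ZMod q) : Chan q :=
  ⟨M.Y, fun s y => (q : ℝ)⁻¹ * ∑ u, ∑ v, if a * u + g * v = s then M.P u v y else 0⟩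


/-- `Q^b(y₁,y₂ | x₁) = q⁻¹ ∑_{x₂} Q(y₁|x₁+x₂) Q(y₂|x₂)`. -/
noncomputable def chB (C : Chan q) : Chan q :=
  ⟨C.B × C.B, fun x₁ y => (q : ℝ)⁻¹ * ∑ x₂, C.Q (x₁ + x₂) y.1 * C.Q x₂ y.2⟩

/-- `Q^g(y₁,y₂,x₁ | x₂) = q⁻¹ Q(y₁|x₁+x₂) Q(y₂|x₂)`, output `((y₁,y₂),x₁)`. -/
noncomputable def chG (C : Chan q) : Chan q :=
  ⟨(C.B × C.B) × ZMod q, fun x₂ z => (q : ℝ)⁻¹ * (C.Q (z.2 + x₂) z.1.1 * C.Q x₂ z.1.2)⟩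

/-!
After multiplying out, the right-hand side is `q⁻³ ∑_{αu₁+γv₁=x} ∑_{αu+γv=s}
P(y₁|u₁+u, v₁+v) P(y₂|u,v)`. For fixed `(u,v)` with `αu+γv = s`, translation by `(u,v)` maps
the fibre of `(u₁,v₁) ↦ αu₁+γv₁` over `x` onto its fibre over `x + s`, so the inner sum over
`(u₁,v₁)` is `q · P[α,γ](y₁|x+s)` and the whole sum factors into the left-hand side.
-/

section

variable {G H R : Type*} [AddGroup G] [Fintype G] [AddGroup H] [DecidableEq H]

theorem sum_ite_map_comp_add_right (L : G →+ H) [AddCommMonoid R] (f : G → R) (g : G) (x : H) :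
    ∑ w, (if L w = x then f (w + g) else 0) = ∑ w, if L w = x + L g then f w else 0 :=
  Fintype.sum_equiv (Equiv.addRight g) _ _ fun w => by simp

theorem sum_ite_map_mul_sum_ite_map [NonUnitalNonAssocSemiring R] (L : G →+ H)
    (f h : G → R) (x s : H) :
    (∑ w, if L w = x + s then f w else 0) * (∑ w, if L w = s then h w else 0) =
      ∑ w₁, if L w₁ = x then ∑ w, (if L w = s then f (w₁ + w) * h w else 0) else 0 := by
  calc (∑ w, if L w = x + s then f w else 0) * (∑ w, if L w = s then h w else 0)
      = ∑ w, if L w = s then (∑ w₁, if L w₁ = x then f (w₁ + w) else 0) * h w else 0 := by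
        rw [Finset.mul_sum]
        refine Finset.sum_congr rfl fun w _ => ?_
        split_ifs with hw
        · rw [sum_ite_map_comp_add_right, hw]
        · rw [mul_zero]
    _ = ∑ w, ∑ w₁, if L w₁ = x then (if L w = s then f (w₁ + w) * h w else 0) else 0 := by
        refine Finset.sum_congr rfl fun w _ => ?_
        split_ifs with hw
        · simp only [Finset.sum_mul, ite_mul, zero_mul]
        · simp
    _ = _ := by
        rw [Finset.sum_comm]
        simp only [ite_sum_zero]

end

theorem chG_degraded_general (q : ℕ) [Fact (Nat.Prime q)] (M : MAC q)
    (a g : ZMod q) :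
    ∀ (y₁ y₂ : M.Y) (x s : ZMod q),
      (chG q (chLin q M a g)).Q s ((y₁, y₂), x) =
        ∑ u₁, ∑ v₁, if a * u₁ + g * v₁ = x then
          (chLin q (plusT q M) a g).Q s ((y₁, y₂), (u₁, v₁)) else 0 := by
  intro y₁ y₂ x s
  let L : ZMod q × ZMod q →+ ZMod q :=
    AddMonoidHom.mk' (fun w => a * w.1 + g * w.2) fun w w' => by
      simp only [Prod.fst_add, Prod.snd_add]; ring
  have hfactor := sum_ite_map_mul_sum_ite_map L
    (fun w => M.P w.1 w.2 y₁) (fun w => M.P w.1 w.2 y₂) x s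
  simp only [Fintype.sum_prod_type, L, AddMonoidHom.mk'_apply, Prod.mk_add_mk] at hfactor
  simp only [chG, chLin, plusT]
  rw [mul_mul_mul_comm, ← mul_assoc, hfactor]
  simp only [Finset.mul_sum, mul_ite, mul_zero, ← mul_assoc, sq, mul_inv]

/-- **Appendix B, claim (i)**: `(P[α,γ])^g` is degraded with respect to `(P⁺)[α,γ]`:
it is obtained by processing the output `(y₁, y₂, u₁, v₁)` into `(y₁, y₂, αu₁+γv₁)`. -/
theorem chG_degraded (q : ℕ) [Fact (Nat.Prime q)] (M : MAC q) (hM : IsMAC M)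
    (a g : ZMod q) (hag : (a, g) ≠ (0, 0)) :
    ∀ (y₁ y₂ : M.Y) (x s : ZMod q),
      (chG q (chLin q M a g)).Q s ((y₁, y₂), x) =
        ∑ u₁, ∑ v₁, if a * u₁ + g * v₁ = x then
          (chLin q (plusT q M) a g).Q s ((y₁, y₂), (u₁, v₁)) else 0 :=
  chG_degraded_general q M a g

end PolarMAC
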